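/- arXiv:2201.08596 — 2 statements merged into one kernel-verified Lean document; each statement's English description precedes it below -/
import Mathlib

section
/- If G is a connected signed digraph with n vertices that is not a signed cycle, then there exists a degree-bounded finite dynamical system f on G such that f^(n+1) is a constant function. -/
open scoped Classical

/-- A signed digraph on vertex set `V`: for each ordered pair of vertices there may be
a positive arc and/or a negative arc. -/
structure SDigraph (V : Type) where
  pos : V → V → Bool
  neg : V → V → Bool

namespace SDigraph

variable {V : Type}

/-- There is an arc (of some sign) from `a` to `b` (the underlying unsigned digraph). -/
def arc (G : SDigraph V) (a b : V) : Prop := G.pos a b = true ∨ G.neg a b = true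

/-- Out-degree: positive and negative arcs are counted separately. -/
def outdeg [Fintype V] (G : SDigraph V) (i : V) : ℕ :=
  (Finset.univ.filter fun j => G.pos i j = true).card +
  (Finset.univ.filter fun j => G.neg i j = true).card

/-- In-degree: positive and negative arcs are counted separately. -/
def indeg [Fintype V] (G : SDigraph V) (i : V) : ℕ :=
  (Finset.univ.filter fun j => G.pos j i = true).card +
  (Finset.univ.filter fun j => G.neg j i = true).card

/-- The symmetrized adjacency relation (for weak connectivity). -/
def wconnRel (G : SDigraph V) (a b : V) : Prop := G.arc a b ∨ G.arc b a

/-- `G` is (weakly) connected. -/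
def Connected (G : SDigraph V) : Prop :=
  ∀ a b : V, Relation.ReflTransGen (wconnRel G) a b

/-- Directed reachability. -/
def Reach (G : SDigraph V) : V → V → Prop := Relation.ReflTransGen G.arc

/-- Out-degree in the underlying unsigned digraph. -/
noncomputable def underOutdeg [Fintype V] (G : SDigraph V) (i : V) : ℕ :=
  (Finset.univ.filter fun j => G.arc i j).card

/-- In-degree in the underlying unsigned digraph. -/
noncomputable def underIndeg [Fintype V] (G : SDigraph V) (i : V) : ℕ :=
  (Finset.univ.filter fun j => G.arc j i).card

/-- `G` is a signed cycle: the underlying digraph is a directed cycle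
(every vertex has exactly one out- and one in-neighbour and the graph is connected
and nonempty) and there are no parallel arcs. -/
def IsSignedCycleGraph [Fintype V] (G : SDigraph V) : Prop :=
  0 < Fintype.card V ∧ Connected G ∧
  (∀ a b : V, ¬(G.pos a b = true ∧ G.neg a b = true)) ∧
  (∀ i : V, underOutdeg G i = 1) ∧
  (∀ i : V, underIndeg G i = 1)

/-- `steps G m a b`: there is a directed walk of length `m` from `a` to `b`. -/
def steps (G : SDigraph V) : ℕ → V → V → Prop
  | 0 => fun a b => a = b
  | m + 1 => fun a b => ∃ c, G.arc a c ∧ steps G m c b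

/-- Directed distance from `a` to `b`, `⊤` if `b` is not reachable from `a`. -/
noncomputable def dist (G : SDigraph V) (a b : V) : ℕ∞ :=
  sInf {x : ℕ∞ | ∃ m : ℕ, steps G m a b ∧ x = (m : ℕ∞)}

/-- The strong component containing `a`, as a finite set of vertices. -/
noncomputable def scc [Fintype V] (G : SDigraph V) (a : V) : Finset V :=
  Finset.univ.filter fun b => Reach G a b ∧ Reach G b a

/-- The strong component of `a` is initial: no arc enters it from outside. -/
def Initial [Fintype V] (G : SDigraph V) (a : V) : Prop :=
  ∀ b c : V, b ∈ scc G a → G.arc c b → c ∈ scc G a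

/-- `λ(G) = max_i min_{initial strong component I} (d_G(I,i) + |I|)`. -/
noncomputable def lam [Fintype V] (G : SDigraph V) : ℕ∞ :=
  Finset.univ.sup fun i : V =>
    (Finset.univ.filter fun a : V => Initial G a).inf fun a =>
      (scc G a).inf (fun b => dist G b i) + ((scc G a).card : ℕ∞)

/-- `G` is basic: all its initial strong components are trivial
(a single vertex with no loop). -/
def Basic [Fintype V] (G : SDigraph V) : Prop :=
  ∀ a : V, Initial G a → (scc G a).card = 1 ∧ ¬ G.arc a a

/-- The (weakly) connected component containing `a`. -/
noncomputable def component [Fintype V] (G : SDigraph V) (a : V) : Finset V :=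
  Finset.univ.filter fun b => Relation.ReflTransGen (wconnRel G) a b

/-- The subgraph induced by a set `S` of vertices. -/
def induce (G : SDigraph V) (S : Finset V) : SDigraph {x : V // x ∈ S} :=
  ⟨fun a b => G.pos a.1 b.1, fun a b => G.neg a.1 b.1⟩

/-- `v` (with arc signs `s`) is a directed cycle of `G` on `m+1` distinct vertices:
for each `t` there is an arc of sign `s t` from `v t` to `v (t+1)` (cyclically). -/
def IsSignedCycleOn (G : SDigraph V) (m : ℕ)
    (v : Fin (m + 1) → V) (s : Fin (m + 1) → Bool) : Prop :=
  Function.Injective v ∧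
  ∀ t : Fin (m + 1),
    if s t then G.pos (v t) (v (t + 1)) = true else G.neg (v t) (v (t + 1)) = true

/-- `G` has a directed cycle (signs ignored). -/
def HasCycle (G : SDigraph V) : Prop :=
  ∃ (m : ℕ) (v : Fin (m + 1) → V), Function.Injective v ∧
    ∀ t : Fin (m + 1), G.arc (v t) (v (t + 1))

/-- Number of negative arcs in a sign pattern. -/
def negCount {m : ℕ} (s : Fin (m + 1) → Bool) : ℕ :=
  (Finset.univ.filter fun t => s t = false).card

/-- `G` has a positive cycle. -/
def HasPositiveCycle (G : SDigraph V) : Prop :=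
  ∃ (m : ℕ) (v : Fin (m + 1) → V) (s : Fin (m + 1) → Bool),
    IsSignedCycleOn G m v s ∧ negCount s % 2 = 0

/-- `G` has a negative cycle. -/
def HasNegativeCycle (G : SDigraph V) : Prop :=
  ∃ (m : ℕ) (v : Fin (m + 1) → V) (s : Fin (m + 1) → Bool),
    IsSignedCycleOn G m v s ∧ negCount s % 2 = 1

end SDigraph

/-- A finite dynamical system with components indexed by `V`: each `X i` is a
nonempty finite interval of integers and `f` maps `X = ∏ X i` into itself. -/
structure FDS (V : Type) where
  X : V → Finset ℤ
  nonempty : ∀ i, (X i).Nonempty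
  interval : ∀ i, ∀ a ∈ X i, ∀ b ∈ X i, ∀ c : ℤ, a ≤ c → c ≤ b → c ∈ X i
  f : (V → ℤ) → V → ℤ
  maps : ∀ x, (∀ i, x i ∈ X i) → ∀ i, f x i ∈ X i

namespace FDS

variable {V : Type}

/-- `x` is a state of the system, i.e. `x ∈ X`. -/
def mem (F : FDS V) (x : V → ℤ) : Prop := ∀ i, x i ∈ F.X i

/-- `G` is the interaction graph of `F`: there is a positive (negative) arc from
`j` to `i` iff increasing `x j` by one can strictly increase (decrease) `f _ i`. -/
def onGraph [DecidableEq V] (F : FDS V) (G : SDigraph V) : Prop :=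
  (∀ j i, G.pos j i = true ↔ ∃ x, F.mem x ∧ x j + 1 ∈ F.X j ∧
      F.f x i < F.f (Function.update x j (x j + 1)) i) ∧
  (∀ j i, G.neg j i = true ↔ ∃ x, F.mem x ∧ x j + 1 ∈ F.X j ∧
      F.f (Function.update x j (x j + 1)) i < F.f x i)

/-- `F` is degree-bounded with respect to `G`. -/
def degreeBounded [Fintype V] (F : FDS V) (G : SDigraph V) : Prop :=
  ∀ i, (G.outdeg i = 0 ∧ 0 < G.indeg i → (F.X i).card = 2) ∧
    (¬(G.outdeg i = 0 ∧ 0 < G.indeg i) → (F.X i).card ≤ G.outdeg i + 1)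

/-- Fixed points of `F`. -/
def IsFixed (F : FDS V) (x : V → ℤ) : Prop := F.mem x ∧ F.f x = x

/-- `F` is nilpotent: some iterate is constant on `X`. -/
def Nilpotent (F : FDS V) : Prop :=
  ∃ k : ℕ, 1 ≤ k ∧ ∃ c, ∀ x, F.mem x → F.f^[k] x = c

/-- `F` converges toward `H` in `k` steps:
`f^k(X) ⊆ h(Y) ⊆ Y ⊆ X` and `f = h` on `Y`. -/
def ConvergesToward (F H : FDS V) (k : ℕ) : Prop :=
  (∀ i, H.X i ⊆ F.X i) ∧
  (∀ x, F.mem x → ∃ y, H.mem y ∧ F.f^[k] x = H.f y) ∧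
  (∀ x, H.mem x → F.f x = H.f x)

end FDS

/-!
Each non-root vertex `i` is updated by a two-valued map: `f_i` is `0` or a fixed value `h_i`
according to whether a conjunction of threshold literals, one per in-arc, agrees with an
orientation bit of `i`. Each literal is monotone in the direction given by the sign of its arc,
so the interaction graph is exactly `G`, and `X_i = [0, d⁺(i)]` keeps the system degree-bounded.

Roles are assigned greedily. A vertex without in-arcs is constant (a root). A vertex with an
in-arc from an already treated vertex `p` is a child of `p`: its orientation makes the literal of
that arc false at the limit value of `p`, so it settles one step after `p`. A vertex with an in-arc
from a vertex `u` of out-degree at least `2` is a gadget: it reads `u` through a literal that is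
false on the whole image of `f_u`, either the window `{1}` of a pair of parallel arcs (and then
`h_u = 2`) or the threshold `d⁺(u) > h_u`, so it settles after two steps. If no untreated vertex
qualifies, the untreated vertices are closed under predecessors, all of out-degree at most `1`,
and connectivity makes `G` a signed cycle. Ranks stay below `n + 2`.
-/

namespace SDigraph

open Finset Function

variable {V : Type} {G : SDigraph V}

def signedArc (G : SDigraph V) (j i : V) (s : Bool) : Prop :=
  (if s then G.pos j i else G.neg j i) = true

def Parallel (G : SDigraph V) (j i : V) : Prop :=
  G.pos j i = true ∧ G.neg j i = true

lemma signedArc.arc {j i : V} {s : Bool} (h : G.signedArc j i s) : G.arc j i := by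
  cases s
  · exact Or.inr h
  · exact Or.inl h

lemma arc_iff_exists_signedArc {j i : V} : G.arc j i ↔ ∃ s, G.signedArc j i s :=
  ⟨fun h => h.elim (fun h => ⟨true, h⟩) (fun h => ⟨false, h⟩), fun ⟨_, h⟩ => h.arc⟩

lemma parallel_iff_forall_signedArc {j i : V} : G.Parallel j i ↔ ∀ s, G.signedArc j i s :=
  ⟨fun h s => by cases s; exacts [h.2, h.1], fun h => ⟨h true, h false⟩⟩

lemma parallel_of_signedArc_of_ne {j i : V} {s t : Bool} (hs : G.signedArc j i s)
    (ht : G.signedArc j i t) (hst : s ≠ t) : G.Parallel j i := by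
  cases s <;> cases t <;> first | exact absurd rfl hst | exact ⟨ht, hs⟩ | exact ⟨hs, ht⟩

noncomputable def outArcs [Fintype V] (G : SDigraph V) (j : V) : Finset (V × Bool) :=
  univ.filter fun a => G.signedArc j a.1 a.2

noncomputable def inArcs [Fintype V] (G : SDigraph V) (i : V) : Finset (V × Bool) :=
  univ.filter fun a => G.signedArc a.1 i a.2

lemma outdeg_eq_card_outArcs [Fintype V] (j : V) : G.outdeg j = (G.outArcs j).card := by
  rw [outdeg, outArcs, card_filter, card_filter, card_filter, ← univ_product_univ,
    sum_product_right, Fintype.sum_bool]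
  simp [signedArc]

lemma indeg_eq_card_inArcs [Fintype V] (i : V) : G.indeg i = (G.inArcs i).card := by
  rw [indeg, inArcs, card_filter, card_filter, card_filter, ← univ_product_univ,
    sum_product_right, Fintype.sum_bool]
  simp [signedArc]

section Degrees

variable [Fintype V] {i j k : V} {s t : Bool}

lemma mem_outArcs : (i, s) ∈ G.outArcs j ↔ G.signedArc j i s := by
  simp [outArcs]

lemma one_le_outdeg (h : G.signedArc j i s) : 1 ≤ G.outdeg j := by
  rw [outdeg_eq_card_outArcs]
  exact card_pos.2 ⟨(i, s), mem_outArcs.2 h⟩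

lemma two_le_outdeg_of_parallel (h : G.Parallel j i) : 2 ≤ G.outdeg j := by
  rw [outdeg_eq_card_outArcs]
  refine le_trans (by simp) (card_le_card (s := {(i, true), (i, false)}) ?_)
  simp only [insert_subset_iff, singleton_subset_iff, mem_outArcs]
  exact h

lemma three_le_outdeg (hk : G.Parallel j k) (hi : G.signedArc j i s) (hik : i ≠ k) :
    3 ≤ G.outdeg j := by
  rw [outdeg_eq_card_outArcs]
  refine le_trans (by simp [hik]) (card_le_card (s := {(i, s), (k, true), (k, false)}) ?_)
  simp only [insert_subset_iff, singleton_subset_iff, mem_outArcs]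
  exact ⟨hi, hk⟩

lemma eq_of_outdeg_le_one (hj : G.outdeg j ≤ 1) (hi : G.signedArc j i s)
    (hk : G.signedArc j k t) : i = k ∧ s = t := by
  rw [outdeg_eq_card_outArcs] at hj
  exact Prod.ext_iff.1 (card_le_one.1 hj _ (mem_outArcs.2 hi) _ (mem_outArcs.2 hk))

lemma indeg_pos_iff : 0 < G.indeg i ↔ ∃ j s, G.signedArc j i s := by
  simp [indeg_eq_card_inArcs, card_pos, Finset.Nonempty, inArcs]

end Degrees

lemma Connected.induction (hconn : G.Connected) {p : V → Prop}
    (hp : ∀ j i, G.arc j i → (p j ↔ p i)) {a : V} (ha : p a) (v : V) : p v := by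
  induction hconn a v with
  | refl => exact ha
  | tail _ h ih => exact h.elim (fun h => (hp _ _ h).1 ih) (fun h => (hp _ _ h).2 ih)

lemma card_filter_eq_one [Fintype V] {p : V → Prop} {a : V} (h : ∀ b, p b ↔ b = a) :
    (univ.filter p).card = 1 :=
  card_eq_one.2 ⟨a, by ext b; simp [h]⟩

/-- Choosing an in-neighbour `τ i` of each `i ∈ C` gives an injection `C → C` (its values have
out-degree `≤ 1`), hence a bijection: every vertex of `C` has exactly one out-arc, it stays in
`C`, and connectivity forces `C` to contain every vertex. -/
lemma isSignedCycleGraph_of_closed_predecessors [Fintype V] (hconn : G.Connected) {C : Finset V}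
    (hC : C.Nonempty) (hin : ∀ i ∈ C, ∃ j s, G.signedArc j i s)
    (hpred : ∀ i ∈ C, ∀ j s, G.signedArc j i s → j ∈ C ∧ G.outdeg j ≤ 1) :
    G.IsSignedCycleGraph := by
  choose τ sgn hτ using hin
  have hτC i hi : τ i hi ∈ C := (hpred i hi _ _ (hτ i hi)).1
  have hτdeg i hi : G.outdeg (τ i hi) ≤ 1 := (hpred i hi _ _ (hτ i hi)).2
  have hτout i hi k t (h : G.signedArc (τ i hi) k t) : k = i :=
    (eq_of_outdeg_le_one (hτdeg i hi) h (hτ i hi)).1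
  have hτsurj : ∀ j ∈ C, ∃ i hi, j = τ i hi :=
    surj_on_of_inj_on_of_card_le τ hτC (fun a b ha hb hab => hτout b hb a _ (hab ▸ hτ a ha))
      le_rfl
  have hmem : ∀ v, v ∈ C := by
    obtain ⟨a, ha⟩ := hC
    refine hconn.induction (fun j i hji => ⟨fun hj => ?_, fun hi => ?_⟩) ha
    · obtain ⟨k, hk, rfl⟩ := hτsurj j hj
      obtain ⟨s, hs⟩ := arc_iff_exists_signedArc.1 hji
      exact hτout k hk i s hs ▸ hk
    · obtain ⟨s, hs⟩ := arc_iff_exists_signedArc.1 hji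
      exact (hpred i hi j s hs).1
  have hτ_of_arc j i (h : G.arc j i) : j = τ i (hmem i) := by
    obtain ⟨k, hk, rfl⟩ := hτsurj j (hmem j)
    obtain ⟨s, hs⟩ := arc_iff_exists_signedArc.1 h
    obtain rfl := hτout k hk i s hs
    rfl
  refine ⟨Fintype.card_pos_iff.2 ⟨hC.choose⟩, hconn, fun a b hab => ?_, fun j => ?_,
    fun i => ?_⟩
  · obtain ⟨k, hk, rfl⟩ := hτsurj a (hmem a)
    exact absurd (two_le_outdeg_of_parallel (G := G) hab) (by have := hτdeg k hk; omega)
  · obtain ⟨k, hk, rfl⟩ := hτsurj j (hmem j)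
    refine card_filter_eq_one (a := k) fun b => ⟨fun h => ?_, fun h => h ▸ (hτ k hk).arc⟩
    obtain ⟨s, hs⟩ := arc_iff_exists_signedArc.1 h
    exact hτout k hk b s hs
  · exact card_filter_eq_one (a := τ i (hmem i))
      fun b => ⟨hτ_of_arc b i, fun h => h ▸ (hτ i (hmem i)).arc⟩

/-- The role of a vertex `i` in the construction: a `root` has no in-arc and is reset to `0`; a
`child p s` follows its parent `p` through the arc `p → i` of sign `s`; a `gadget u` reads an arc
`u → i` leaving a vertex `u` of out-degree at least `2`. -/
inductive Role (V : Type) where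
  | root : Role V
  | child (p : V) (s : Bool) : Role V
  | gadget (u : V) : Role V

def Role.IsValid [Fintype V] (G : SDigraph V) (S : Finset V) (rank : V → ℕ)
    (orient : V → Bool) (i : V) (k : ℕ) (o : Bool) : Role V → Prop
  | .root => (∀ j s, ¬ G.signedArc j i s) ∧ 1 ≤ k ∧ o = true
  | .child p s => p ∈ S ∧ G.signedArc p i s ∧ rank p < k ∧ o = (orient p == s)
  | .gadget u => G.signedArc u i o ∧ 2 ≤ G.outdeg u ∧ 2 ≤ k

/-- Roles on the treated vertices `S`; the rank of a vertex bounds the number of steps after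
which the constructed system fixes it. -/
structure Plan [Fintype V] (G : SDigraph V) (S : Finset V) where
  role : V → Role V
  rank : V → ℕ
  orient : V → Bool
  isValid : ∀ i ∈ S, (role i).IsValid G S rank orient i (rank i) (orient i)
  rank_le : ∀ i ∈ S, rank i ≤ S.card + 1

lemma Role.IsValid.insert [Fintype V] [DecidableEq V] {S : Finset V} {rank : V → ℕ}
    {orient : V → Bool} {r : Role V} {i x : V} {k k' : ℕ} {o o' : Bool} (hx : x ∉ S)
    (h : r.IsValid G S rank orient i k o) :
    r.IsValid G (insert x S) (update rank x k') (update orient x o') i k o := by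
  cases r with
  | root => exact h
  | gadget u => exact h
  | child p s =>
    obtain ⟨hp, harc, hlt, ho⟩ := h
    have hpx : p ≠ x := by rintro rfl; exact hx hp
    exact ⟨mem_insert_of_mem hp, harc, by rwa [update_of_ne hpx], by rwa [update_of_ne hpx]⟩

namespace Plan

variable [Fintype V]

def empty (G : SDigraph V) : Plan G ∅ where
  role _ := .root
  rank _ := 1
  orient _ := true
  isValid := by simp
  rank_le := by simp

def extend [DecidableEq V] {S : Finset V} (P : Plan G S) {x : V} (hx : x ∉ S) (r : Role V)
    (k : ℕ) (o : Bool) (hr : r.IsValid G S P.rank P.orient x k o) (hk : k ≤ S.card + 2) :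
    Plan G (insert x S) where
  role := update P.role x r
  rank := update P.rank x k
  orient := update P.orient x o
  isValid i hi := by
    obtain rfl | hiS := mem_insert.1 hi
    · simpa using hr.insert hx
    · have hix : i ≠ x := by rintro rfl; exact hx hiS
      simpa [update_of_ne hix] using (P.isValid i hiS).insert hx
  rank_le i hi := by
    rw [card_insert_of_notMem hx]
    obtain rfl | hiS := mem_insert.1 hi
    · simpa using hk
    · have hix : i ≠ x := by rintro rfl; exact hx hiS
      simpa [update_of_ne hix] using (P.rank_le i hiS).trans (Nat.le_succ _)

lemma exists_insert (hconn : G.Connected) (hnc : ¬ G.IsSignedCycleGraph) {S : Finset V}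
    (P : Plan G S) (hS : S ≠ univ) : ∃ x ∉ S, Nonempty (Plan G (insert x S)) := by
  by_cases hroot : ∃ x ∉ S, ∀ j s, ¬ G.signedArc j x s
  · obtain ⟨x, hx, h⟩ := hroot
    exact ⟨x, hx, ⟨P.extend hx .root 1 true ⟨h, le_rfl, rfl⟩ (by omega)⟩⟩
  by_cases hchild : ∃ x ∉ S, ∃ p ∈ S, ∃ s, G.signedArc p x s
  · obtain ⟨x, hx, p, hp, s, h⟩ := hchild
    have := P.rank_le p hp
    exact ⟨x, hx, ⟨P.extend hx (.child p s) (P.rank p + 1) (P.orient p == s)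
      ⟨hp, h, lt_add_one _, rfl⟩ (by omega)⟩⟩
  by_cases hgadget : ∃ x ∉ S, ∃ u s, G.signedArc u x s ∧ 2 ≤ G.outdeg u
  · obtain ⟨x, hx, u, s, h, hu⟩ := hgadget
    exact ⟨x, hx, ⟨P.extend hx (.gadget u) 2 s ⟨h, hu, le_rfl⟩ (by omega)⟩⟩
  push Not at hroot hchild hgadget
  refine absurd (isSignedCycleGraph_of_closed_predecessors hconn (C := Sᶜ) ?_
    (fun i hi => hroot i (mem_compl.1 hi)) fun i hi j s h => ⟨?_, ?_⟩) hnc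
  · exact nonempty_iff_ne_empty.2 (by simpa using hS)
  · exact mem_compl.2 fun hj => hchild i (mem_compl.1 hi) j hj s h
  · exact Nat.le_of_lt_succ (hgadget i (mem_compl.1 hi) j s h)

theorem nonempty_univ (hconn : G.Connected) (hnc : ¬ G.IsSignedCycleGraph) {S : Finset V}
    (P : Plan G S) : Nonempty (Plan G univ) := by
  by_cases hS : S = univ
  · exact hS ▸ ⟨P⟩
  obtain ⟨x, hx, ⟨P'⟩⟩ := P.exists_insert hconn hnc hS
  exact nonempty_univ hconn hnc P'
termination_by Sᶜ.card
decreasing_by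
  rw [compl_insert]
  exact card_erase_lt_of_mem (mem_compl.2 hx)

end Plan

section States

variable [Fintype V] {i j u : V} {s : Bool}

def maxState (G : SDigraph V) (i : V) : ℕ :=
  if 0 < G.outdeg i then G.outdeg i else if 0 < G.indeg i then 1 else 0

/-- The nonzero value of `f_i`. It is `2` when a pair of parallel arcs leaves `i`, so that `f_i`
avoids the window `{1}` of such a pair. -/
noncomputable def highState (G : SDigraph V) (i : V) : ℤ :=
  if ∃ j, G.Parallel i j then 2 else 1

lemma maxState_eq_outdeg (h : 0 < G.outdeg i) : G.maxState i = G.outdeg i := if_pos h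

lemma one_le_maxState_of_signedArc (h : G.signedArc i j s) : 1 ≤ G.maxState i := by
  have := one_le_outdeg h
  rw [maxState_eq_outdeg (by omega)]
  omega

lemma one_le_highState (i : V) : 1 ≤ G.highState i := by
  unfold highState; split <;> norm_num

lemma highState_of_parallel (h : G.Parallel i j) : G.highState i = 2 := if_pos ⟨j, h⟩

lemma highState_le_maxState (h : G.signedArc j i s) : G.highState i ≤ G.maxState i := by
  unfold highState
  split
  · rename_i hpar
    obtain ⟨k, hk⟩ := hpar
    have := two_le_outdeg_of_parallel hk
    rw [maxState_eq_outdeg (by omega)]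
    omega
  · have : 0 < G.indeg i := indeg_pos_iff.2 ⟨j, s, h⟩
    unfold maxState
    split_ifs <;> omega

lemma highState_lt_maxState (hu : G.signedArc u i s) (hnp : ¬ G.Parallel u i)
    (hdeg : 2 ≤ G.outdeg u) : G.highState u < G.maxState u := by
  rw [maxState_eq_outdeg (by omega)]
  unfold highState
  split
  · rename_i hpar
    obtain ⟨k, hk⟩ := hpar
    have := three_le_outdeg hk hu (by rintro rfl; exact hnp hk)
    omega
  · omega

end States

namespace Plan

variable [Fintype V] (P : Plan G univ) {i j k p u : V} {s t : Bool}

lemma role_root (h : P.role i = .root) : (∀ j s, ¬ G.signedArc j i s) ∧ P.orient i = true := by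
  have := P.isValid i (mem_univ i)
  rw [h] at this
  exact ⟨this.1, this.2.2⟩

lemma role_child (h : P.role i = .child p s) :
    G.signedArc p i s ∧ P.rank p < P.rank i ∧ P.orient i = (P.orient p == s) := by
  have := P.isValid i (mem_univ i)
  rw [h] at this
  exact this.2

lemma role_gadget (h : P.role i = .gadget u) :
    G.signedArc u i (P.orient i) ∧ 2 ≤ G.outdeg u ∧ 2 ≤ P.rank i := by
  have := P.isValid i (mem_univ i)
  rwa [h] at this

lemma one_le_rank (i : V) : 1 ≤ P.rank i := by
  have := P.isValid i (mem_univ i)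
  cases h : P.role i <;> rw [h] at this <;> simp only [Role.IsValid] at this <;> omega

lemma rank_le_card (i : V) : P.rank i ≤ Fintype.card V + 1 := by
  simpa using P.rank_le i (mem_univ i)

lemma exists_signedArc_of_ne_root (h : P.role i ≠ .root) : ∃ j s, G.signedArc j i s := by
  cases hr : P.role i with
  | root => exact absurd hr h
  | child p s => exact ⟨p, s, (P.role_child hr).1⟩
  | gadget u => exact ⟨u, _, (P.role_gadget hr).1⟩

/-- The threshold at which the arc `j → i` of sign `s` acts. Parallel arcs get the window
`{1}`, the arc read by a gadget gets the threshold `maxState j`, which `highState j` never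
reaches, and all other arcs get `1`. -/
noncomputable def level (j i : V) (s : Bool) : ℤ :=
  if G.Parallel j i then (if s = P.orient i then 1 else 2)
  else if P.role i = .gadget j then G.maxState j else 1

def Literal (j i : V) (s : Bool) (v : ℤ) : Prop :=
  (P.level j i s ≤ v ↔ s = P.orient i)

def Active (x : V → ℤ) (i : V) : Prop :=
  ∀ j s, G.signedArc j i s → P.Literal j i s (x j)

noncomputable def localMap (x : V → ℤ) (i : V) : ℤ :=
  if P.role i = .root then 0 else if (P.Active x i ↔ P.orient i = true) then G.highState i else 0

noncomputable def limit (i : V) : ℤ :=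
  if P.orient i then 0 else G.highState i

lemma level_mem_Icc (h : G.signedArc j i s) :
    1 ≤ P.level j i s ∧ P.level j i s ≤ G.maxState j := by
  have := one_le_maxState_of_signedArc h
  unfold level
  split_ifs with hpar
  · exact ⟨le_rfl, by omega⟩
  · have := two_le_outdeg_of_parallel hpar
    rw [maxState_eq_outdeg (by omega)]
    omega
  · omega
  · omega

lemma eq_of_level_eq (hs : G.signedArc j i s) (ht : G.signedArc j i t)
    (h : P.level j i s = P.level j i t) : s = t := by
  by_contra hst
  have hpar := parallel_of_signedArc_of_ne hs ht hst
  simp only [level, hpar, if_true] at h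
  cases s <;> cases t <;> cases ho : P.orient i <;> simp_all

lemma localMap_eq_zero_or_highState (x : V → ℤ) (i : V) :
    P.localMap x i = 0 ∨ P.localMap x i = G.highState i := by
  unfold localMap
  split_ifs <;> simp

lemma localMap_mem_Icc (x : V → ℤ) (i : V) :
    0 ≤ P.localMap x i ∧ P.localMap x i ≤ G.maxState i := by
  have := one_le_highState (G := G) i
  by_cases hr : P.role i = .root
  · simp [localMap, hr]
  obtain ⟨j, s, h⟩ := P.exists_signedArc_of_ne_root hr
  have := highState_le_maxState h
  rcases P.localMap_eq_zero_or_highState x i with h0 | h0 <;> rw [h0] <;> omega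

noncomputable def toFDS : FDS V where
  X i := Icc 0 (G.maxState i)
  nonempty _ := nonempty_Icc.2 (by positivity)
  interval _ _ ha _ hb _ hac hcb :=
    mem_Icc.2 ⟨(mem_Icc.1 ha).1.trans hac, hcb.trans (mem_Icc.1 hb).2⟩
  f := P.localMap
  maps x _ i := mem_Icc.2 (P.localMap_mem_Icc x i)

lemma toFDS_mem_iff {x : V → ℤ} :
    P.toFDS.mem x ↔ ∀ i, 0 ≤ x i ∧ x i ≤ G.maxState i := by
  simp [FDS.mem, toFDS]

lemma toFDS_degreeBounded : P.toFDS.degreeBounded G := by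
  intro i
  have hcard : (P.toFDS.X i).card = G.maxState i + 1 := by simp [toFDS]
  rw [hcard]
  unfold maxState
  refine ⟨fun ⟨h0, hin⟩ => by simp [h0, hin], fun h => ?_⟩
  split_ifs <;> omega

lemma localMap_lt_iff (hr : P.role i ≠ .root) (x y : V → ℤ) :
    P.localMap x i < P.localMap y i ↔
      ¬ (P.Active x i ↔ P.orient i) ∧ (P.Active y i ↔ P.orient i) := by
  have := one_le_highState (G := G) i
  unfold localMap
  simp only [hr, if_false]
  split_ifs <;> simp_all <;> omega

lemma localMap_eq_limit_of_not_literal (hr : P.role i ≠ .root) (h : G.signedArc j i s)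
    {x : V → ℤ} (hx : ¬ P.Literal j i s (x j)) : P.localMap x i = P.limit i := by
  have hA : ¬ P.Active x i := fun hA => hx (hA j s h)
  cases ho : P.orient i <;> simp [localMap, limit, hr, hA, ho]

lemma localMap_of_root (hr : P.role i = .root) (x : V → ℤ) : P.localMap x i = P.limit i := by
  simp [localMap, limit, hr, (P.role_root hr).2]

lemma localMap_of_child (hr : P.role i = .child p s) {x : V → ℤ} (hx : x p = P.limit p) :
    P.localMap x i = P.limit i := by
  obtain ⟨harc, -, ho⟩ := P.role_child hr
  refine P.localMap_eq_limit_of_not_literal (by simp [hr]) harc ?_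
  have hlevel := (P.level_mem_Icc harc).1
  rw [Literal, hx, ho, limit]
  cases hp : P.orient p
  · have hso : s ≠ P.orient i := by cases s <;> simp [ho, hp]
    have : P.level p i s ≤ G.highState p := by
      unfold level
      split_ifs with hpar hgad
      · rw [highState_of_parallel hpar]
      · simp [hr] at hgad
      · exact one_le_highState p
    simpa [hp, hso] using this
  · cases s <;> simp <;> omega

lemma localMap_of_gadget (hr : P.role i = .gadget u) {x : V → ℤ}
    (hx : x u = 0 ∨ x u = G.highState u) : P.localMap x i = P.limit i := by
  obtain ⟨harc, hdeg, -⟩ := P.role_gadget hr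
  have hroot : P.role i ≠ .root := by simp [hr]
  by_cases hpar : G.Parallel u i
  · have hlevel t : P.level u i t = if t = P.orient i then 1 else 2 := if_pos hpar
    rw [highState_of_parallel hpar] at hx
    rcases hx with hx | hx
    · refine P.localMap_eq_limit_of_not_literal hroot harc ?_
      simp [Literal, hlevel, hx]
    · refine P.localMap_eq_limit_of_not_literal hroot
        (parallel_iff_forall_signedArc.1 hpar (!P.orient i)) ?_
      simp [Literal, hlevel, hx]
  · refine P.localMap_eq_limit_of_not_literal hroot harc ?_
    have := highState_lt_maxState harc hpar hdeg
    have := one_le_highState (G := G) u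
    simp only [Literal, level, hpar, hr, if_false, if_true, iff_true, not_le]
    omega

theorem iterate_localMap_apply (x : V → ℤ) (k : ℕ) (i : V) (hk : P.rank i ≤ k) :
    P.localMap^[k] x i = P.limit i := by
  induction k generalizing i with
  | zero => have := P.one_le_rank i; omega
  | succ k ih =>
    rw [iterate_succ_apply']
    cases hr : P.role i with
    | root => exact P.localMap_of_root hr _
    | child p s =>
      exact P.localMap_of_child hr (ih p (by have := (P.role_child hr).2.1; omega))
    | gadget u =>
      have := (P.role_gadget hr).2.2
      obtain ⟨m, rfl⟩ : ∃ m, k = m + 1 := ⟨k - 1, by omega⟩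
      rw [iterate_succ_apply']
      exact P.localMap_of_gadget hr (P.localMap_eq_zero_or_highState _ u)

lemma exists_literal (i j : V) :
    ∃ v : ℤ, 0 ≤ v ∧ v ≤ G.maxState j ∧
      ∀ s, G.signedArc j i s → P.Literal j i s v := by
  by_cases hpar : G.Parallel j i
  · have := two_le_outdeg_of_parallel hpar
    refine ⟨1, by norm_num, by rw [maxState_eq_outdeg (by omega)]; omega, fun s _ => ?_⟩
    simp only [Literal, level, hpar, if_true]
    split_ifs <;> simp_all
  by_cases harc : ∃ s, G.signedArc j i s
  · obtain ⟨s, hs⟩ := harc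
    have := P.level_mem_Icc hs
    refine ⟨if s = P.orient i then P.level j i s else P.level j i s - 1, by split_ifs <;> omega,
      by split_ifs <;> omega, fun t ht => ?_⟩
    by_cases hts : t = s
    · subst hts
      unfold Literal
      split_ifs <;> simp_all
    · exact absurd (parallel_of_signedArc_of_ne ht hs hts) hpar
  · exact ⟨0, le_rfl, by positivity, fun s hs => absurd ⟨s, hs⟩ harc⟩

lemma literal_bnot_of_parallel (hpar : G.Parallel j i) {v : ℤ}
    (hv : P.level j i s - 1 ≤ v ∧ v ≤ P.level j i s) : P.Literal j i (!s) v := by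
  simp only [Literal, level, hpar, if_true] at hv ⊢
  cases s <;> cases ho : P.orient i <;> simp_all

section Update

variable [DecidableEq V] {x : V → ℤ}

lemma exists_active_update (h : G.signedArc j i s) :
    ∃ x, P.toFDS.mem x ∧ x j + 1 ∈ P.toFDS.X j ∧
      (P.Active x i ↔ s ≠ P.orient i) ∧
      (P.Active (update x j (x j + 1)) i ↔ s = P.orient i) := by
  choose w hw₀ hw₁ hw using P.exists_literal i
  have hL := P.level_mem_Icc h
  have hactive (v : ℤ) (hv : P.level j i s - 1 ≤ v ∧ v ≤ P.level j i s) :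
      P.Active (update w j v) i ↔ P.Literal j i s v := by
    refine ⟨fun hA => by simpa using hA j s h, fun hv' k t ht => ?_⟩
    rcases eq_or_ne k j with rfl | hk
    · rw [update_self]
      by_cases hts : t = s
      · exact hts ▸ hv'
      · obtain rfl : t = !s := by cases t <;> cases s <;> simp_all
        exact P.literal_bnot_of_parallel (parallel_of_signedArc_of_ne h ht (Ne.symm hts)) hv
    · rw [update_of_ne hk]
      exact hw k t ht
  refine ⟨update w j (P.level j i s - 1), P.toFDS_mem_iff.2 fun k => ?_,
    mem_Icc.2 (by simp; omega), ?_, ?_⟩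
  · rcases eq_or_ne k j with rfl | hk
    · simp; omega
    · simpa [update_of_ne hk] using ⟨hw₀ k, hw₁ k⟩
  · rw [hactive _ ⟨le_rfl, by omega⟩, Literal]
    simp
  · rw [update_self, update_idem, sub_add_cancel, hactive _ ⟨by omega, le_rfl⟩, Literal]
    simp

lemma literal_update_iff (h : k ≠ j ∨ P.level k i s ≠ x j + 1) :
    P.Literal k i s (update x j (x j + 1) k) ↔ P.Literal k i s (x k) := by
  rcases eq_or_ne k j with rfl | hk
  · have hl := h.resolve_left (not_not_intro rfl)
    have : P.level k i s ≤ x k + 1 ↔ P.level k i s ≤ x k := by omega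
    simp [Literal, this]
  · rw [update_of_ne hk]

lemma literal_update_imp (ht : G.signedArc j i t) (hl : P.level j i t = x j + 1)
    (hs : G.signedArc k i s) :
    (t = P.orient i → P.Literal k i s (x k) → P.Literal k i s (update x j (x j + 1) k)) ∧
    (t ≠ P.orient i → P.Literal k i s (update x j (x j + 1) k) → P.Literal k i s (x k)) := by
  by_cases hc : k = j ∧ P.level k i s = x j + 1
  · obtain ⟨rfl, hl'⟩ := hc
    obtain rfl := P.eq_of_level_eq hs ht (hl'.trans hl.symm)
    simp only [Literal, hl, update_self]
    constructor <;> intro h₁ h₂ <;> simp_all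
  · rw [P.literal_update_iff (by tauto)]
    exact ⟨fun _ => id, fun _ => id⟩

lemma exists_signedArc_of_localMap_ne
    (h : P.localMap x i ≠ P.localMap (update x j (x j + 1)) i) :
    ∃ t, G.signedArc j i t ∧
      (t = P.orient i → P.Active x i → P.Active (update x j (x j + 1)) i) ∧
      (t ≠ P.orient i → P.Active (update x j (x j + 1)) i → P.Active x i) := by
  by_cases hc : ∃ t, G.signedArc j i t ∧ P.level j i t = x j + 1
  · obtain ⟨t, ht, hl⟩ := hc
    exact ⟨t, ht, fun hto hA k s hs => (P.literal_update_imp ht hl hs).1 hto (hA k s hs),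
      fun hto hA k s hs => (P.literal_update_imp ht hl hs).2 hto (hA k s hs)⟩
  · have hA : P.Active (update x j (x j + 1)) i ↔ P.Active x i :=
      forall_congr' fun k => forall_congr' fun s => imp_congr_right fun hs =>
        P.literal_update_iff (not_and_or.1 (by rintro ⟨rfl, hl⟩; exact hc ⟨s, hs, hl⟩))
    exact (h (by rw [localMap, localMap, hA])).elim

lemma signedArc_of_localMap_lt (h : P.localMap x i < P.localMap (update x j (x j + 1)) i) :
    G.signedArc j i true := by
  have hr : P.role i ≠ .root := by rintro hr; simp [localMap, hr] at h
  obtain ⟨t, ht, hup, hdown⟩ := P.exists_signedArc_of_localMap_ne h.ne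
  rw [P.localMap_lt_iff hr] at h
  cases t
  · cases ho : P.orient i <;> simp_all
  · exact ht

lemma signedArc_of_localMap_gt (h : P.localMap (update x j (x j + 1)) i < P.localMap x i) :
    G.signedArc j i false := by
  have hr : P.role i ≠ .root := by rintro hr; simp [localMap, hr] at h
  obtain ⟨t, ht, hup, hdown⟩ := P.exists_signedArc_of_localMap_ne h.ne'
  rw [P.localMap_lt_iff hr] at h
  cases t
  · exact ht
  · cases ho : P.orient i <;> simp_all

end Update

lemma toFDS_onGraph [DecidableEq V] : P.toFDS.onGraph G := by
  refine ⟨fun j i => ⟨fun h => ?_, fun ⟨x, _, _, h⟩ => P.signedArc_of_localMap_lt h⟩,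
    fun j i => ⟨fun h => ?_, fun ⟨x, _, _, h⟩ => P.signedArc_of_localMap_gt h⟩⟩
  · obtain ⟨x, hx, hj, hA, hA'⟩ := P.exists_active_update (s := true) h
    refine ⟨x, hx, hj, (P.localMap_lt_iff (fun hr => (P.role_root hr).1 j true h) _ _).2 ?_⟩
    cases ho : P.orient i <;> simp_all
  · obtain ⟨x, hx, hj, hA, hA'⟩ := P.exists_active_update (s := false) h
    refine ⟨x, hx, hj, (P.localMap_lt_iff (fun hr => (P.role_root hr).1 j false h) _ _).2 ?_⟩
    cases ho : P.orient i <;> simp_all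

theorem iterate_toFDS_f (x : V → ℤ) : P.toFDS.f^[Fintype.card V + 1] x = P.limit :=
  funext fun i => P.iterate_localMap_apply x _ i (P.rank_le_card i)

end Plan

end SDigraph

/-- If `G` is a connected signed digraph with `n` vertices that is not a
signed cycle, then there exists a degree-bounded FDS `f` on `G` such that `f^(n+1)` is
constant. -/
theorem stmt0 (n : ℕ) (G : SDigraph (Fin n)) (hconn : SDigraph.Connected G)
    (hnc : ¬ SDigraph.IsSignedCycleGraph G) :
    ∃ F : FDS (Fin n), F.onGraph G ∧ F.degreeBounded G ∧
      ∃ c : Fin n → ℤ, ∀ x, F.mem x → F.f^[n + 1] x = c := by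
  obtain ⟨P⟩ := (SDigraph.Plan.empty G).nonempty_univ hconn hnc
  refine ⟨P.toFDS, P.toFDS_onGraph, P.toFDS_degreeBounded, P.limit, fun x _ => ?_⟩
  simpa using P.iterate_toFDS_f x
end

section
/- Let G be a connected signed digraph. There exists a nilpotent degree-bounded system on G if and only if G is not a signed cycle. -/
open scoped Classical

/-!
On a signed cycle every `X i` has two elements and `f x i` is an injective function of the
coordinate of the unique in-neighbour of `i`; hence `f` is injective on `X` and no iterate of
`f` is constant.

Otherwise every vertex `i` becomes a gate. The input from an in-neighbour `j` is a signal
`signal j i (x j)`, monotone, antitone or neither according to the signs of the arcs from `j`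
to `i`, and `i` outputs one of two values. A vertex of out-degree at least two has at least
three values and its signals are constant on its two outputs, so from the second step on only
vertices of out-degree one transmit information. These arcs form a functional graph; off its
cycles the dependencies are acyclic and the state settles. As `G` is connected and not a signed
cycle, every cycle receives an arc from a vertex off the cycles, and the gate at its target is
made an OR or an AND gate so that the settled signal along this arc fixes its output. What
remains is a system with acyclic dependencies on the settled states, which is nilpotent.
-/

open Function

lemma Finset.eq_or_eq_add_one_of_card_le_two {s : Finset ℤ} (hs : s.card ≤ 2) {a v : ℤ}
    (ha : a ∈ s) (ha' : a + 1 ∈ s) (hv : v ∈ s) : v = a ∨ v = a + 1 := by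
  by_contra! h
  have hsub : ({v, a, a + 1} : Finset ℤ) ⊆ s := by simp [Finset.insert_subset_iff, *]
  have := Finset.card_le_card hsub
  rw [Finset.card_insert_of_notMem (by simp [h.1, h.2]), Finset.card_pair (by omega)] at this
  omega

section Convergence

open Filter

variable {ι α : Type*} [Finite ι]

theorem eventually_iterate_apply_eq_of_acc (f : (ι → α) → ι → α) {S : Set (ι → α)}
    (hS : Set.MapsTo f S S) {R : ι → ι → Prop}
    (hdet : ∀ i, ∀ x ∈ S, ∀ y ∈ S, (∀ j, R j i → x j = y j) → f x i = f y i) {i : ι}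
    (hi : Acc R i) : ∀ᶠ t in atTop, ∀ x ∈ S, ∀ y ∈ S, f^[t] x i = f^[t] y i := by
  induction hi with
  | intro i _ ih =>
  have hpred : ∀ᶠ t in atTop, ∀ j, R j i → ∀ x ∈ S, ∀ y ∈ S, f^[t] x j = f^[t] y j :=
    eventually_all.2 fun j => by
      by_cases hj : R j i
      · simpa [hj] using ih j hj
      · simp [hj]
  obtain ⟨T, hT⟩ := eventually_atTop.1 hpred
  refine eventually_atTop.2 ⟨T + 1, fun t ht x hx y hy => ?_⟩
  obtain ⟨t, rfl⟩ : ∃ s, t = s + 1 := ⟨t - 1, by omega⟩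
  rw [iterate_succ_apply', iterate_succ_apply']
  exact hdet i _ (hS.iterate t hx) _ (hS.iterate t hy) fun j hj => hT t (by omega) j hj x hx y hy

theorem wellFounded_of_forall_not_transGen [Finite α] {r : α → α → Prop}
    (h : ∀ a, ¬ Relation.TransGen r a a) : WellFounded r :=
  haveI : Std.Irrefl (Relation.TransGen r) := ⟨h⟩
  Subrelation.wf Relation.TransGen.single (Finite.wellFounded_of_trans_of_irrefl _)

end Convergence

namespace SDigraph

variable {V : Type} [Fintype V]

def DoubleArc (G : SDigraph V) (j i : V) : Prop := G.pos j i = true ∧ G.neg j i = true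

variable {G : SDigraph V}

lemma card_add_card_le_outdeg {j : V} {P N : Finset V} (hP : ∀ i ∈ P, G.pos j i = true)
    (hN : ∀ i ∈ N, G.neg j i = true) : P.card + N.card ≤ G.outdeg j :=
  add_le_add (Finset.card_le_card fun i hi => by simpa using hP i hi)
    (Finset.card_le_card fun i hi => by simpa using hN i hi)

lemma outdeg_eq_zero_iff {j : V} : G.outdeg j = 0 ↔ ∀ i, ¬ G.arc j i := by
  simp [outdeg, arc, Finset.filter_eq_empty_iff, forall_and]

lemma indeg_eq_zero_iff {i : V} : G.indeg i = 0 ↔ ∀ j, ¬ G.arc j i := by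
  simp [indeg, arc, Finset.filter_eq_empty_iff, forall_and]

lemma one_le_outdeg_of_arc {j i : V} (h : G.arc j i) : 1 ≤ G.outdeg j :=
  Nat.one_le_iff_ne_zero.2 fun h0 => outdeg_eq_zero_iff.1 h0 i h

lemma exists_arc_of_outdeg_pos {j : V} (h : 0 < G.outdeg j) : ∃ i, G.arc j i := by
  by_contra! hno
  exact h.ne' (outdeg_eq_zero_iff.2 hno)

lemma two_le_outdeg_of_doubleArc {j i : V} (h : G.DoubleArc j i) : 2 ≤ G.outdeg j := by
  simpa using card_add_card_le_outdeg (P := {i}) (N := {i}) (by simpa using h.1)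
    (by simpa using h.2)

lemma filter_arc_eq_union (j : V) : Finset.univ.filter (G.arc j) =
    Finset.univ.filter (G.pos j · = true) ∪ Finset.univ.filter (G.neg j · = true) := by
  ext i
  simp [arc]

lemma underOutdeg_le_outdeg (j : V) : G.underOutdeg j ≤ G.outdeg j := by
  rw [underOutdeg, outdeg, filter_arc_eq_union]
  exact Finset.card_union_le _ _

lemma outdeg_eq_underOutdeg {j : V} (h : ∀ i, ¬(G.pos j i = true ∧ G.neg j i = true)) :
    G.outdeg j = G.underOutdeg j := by
  rw [underOutdeg, outdeg, filter_arc_eq_union, Finset.card_union_of_disjoint]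
  exact Finset.disjoint_filter.2 fun i _ hp hn => h i ⟨hp, hn⟩

lemma eq_of_arc_of_outdeg_le_one {j i i' : V} (h : G.outdeg j ≤ 1)
    (hi : G.arc j i) (hi' : G.arc j i') : i = i' := by
  by_contra hne
  have hsub : ({i, i'} : Finset V) ⊆ Finset.univ.filter (G.arc j) := by
    simp [Finset.insert_subset_iff, hi, hi']
  have := (Finset.card_le_card hsub).trans (underOutdeg_le_outdeg j)
  rw [Finset.card_pair hne] at this
  omega

lemma doubleArc_of_arc_of_outdeg_eq_two {j i i₀ : V} (h2 : G.outdeg j = 2)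
    (hd : G.DoubleArc j i₀) (h : G.arc j i) : G.DoubleArc j i := by
  obtain rfl : i = i₀ := by
    by_contra hne
    rcases h with h | h
    · have := card_add_card_le_outdeg (G := G) (j := j) (P := {i, i₀}) (N := {i₀})
        (by simp [h, hd.1]) (by simp [hd.2])
      rw [Finset.card_pair hne, Finset.card_singleton] at this
      omega
    · have := card_add_card_le_outdeg (G := G) (j := j) (P := {i₀}) (N := {i, i₀})
        (by simp [hd.1]) (by simp [h, hd.2])
      rw [Finset.card_pair hne, Finset.card_singleton] at this
      omega
  exact hd

lemma IsSignedCycleGraph.outdeg_eq_one (hc : G.IsSignedCycleGraph) (j : V) : G.outdeg j = 1 :=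
  (outdeg_eq_underOutdeg (hc.2.2.1 j)).trans (hc.2.2.2.1 j)

lemma Connected.indeg_pos_of_outdeg_eq_zero {a b : V} (hconn : G.Connected) (hab : G.arc a b)
    (i : V) (h0 : G.outdeg i = 0) : 0 < G.indeg i := by
  suffices (∃ j, G.arc i j) ∨ ∃ j, G.arc j i by
    rcases this with ⟨j, hj⟩ | ⟨j, hj⟩
    · exact absurd hj (outdeg_eq_zero_iff.1 h0 j)
    · exact Nat.pos_of_ne_zero fun h0' => indeg_eq_zero_iff.1 h0' j hj
  induction hconn a i with
  | refl => exact Or.inl ⟨b, hab⟩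
  | tail _ hcd _ =>
    rcases hcd with h | h
    · exact Or.inr ⟨_, h⟩
    · exact Or.inl ⟨_, h⟩

variable (G)

/-- The out-neighbour of a vertex of out-degree one, and `j` itself for any other vertex. -/
noncomputable def next (j : V) : V :=
  if h : ∃ i, G.arc j i ∧ G.outdeg j = 1 then h.choose else j

/-- `j` lies on a directed cycle all of whose vertices have out-degree one. -/
def OnUnaryCycle (j : V) : Prop := G.outdeg j = 1 ∧ j ∈ periodicPts G.next

def UnaryArc (j i : V) : Prop := G.arc j i ∧ G.outdeg j ≤ 1

variable {G}

lemma arc_next {j : V} (h : G.outdeg j = 1) : G.arc j (G.next j) := by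
  obtain ⟨i, hi⟩ := exists_arc_of_outdeg_pos (h ▸ Nat.one_pos)
  have hex : ∃ i, G.arc j i ∧ G.outdeg j = 1 := ⟨i, hi, h⟩
  rw [next, dif_pos hex]
  exact hex.choose_spec.1

lemma eq_next_of_arc {j i : V} (h : G.outdeg j = 1) (hi : G.arc j i) : i = G.next j :=
  eq_of_arc_of_outdeg_le_one h.le hi (arc_next h)

lemma next_eq_self {j : V} (h : G.outdeg j ≠ 1) : G.next j = j :=
  dif_neg fun ⟨_, _, h'⟩ => h h'

lemma OnUnaryCycle.next {j : V} (h : G.OnUnaryCycle j) : G.OnUnaryCycle (G.next j) := by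
  obtain ⟨h1, n, hn, hper⟩ := h
  refine ⟨?_, mk_mem_periodicPts hn hper.apply⟩
  by_contra h'
  have hfix : IsFixedPt G.next (G.next j) := next_eq_self h'
  have hj : G.next j = j := by
    have : G.next^[n] j = j := hper
    rw [← Nat.sub_add_cancel hn, iterate_succ_apply, (hfix.iterate _).eq] at this
    exact this
  rw [hj] at h'
  exact h' h1

lemma OnUnaryCycle.iterate {j : V} (h : G.OnUnaryCycle j) (t : ℕ) :
    G.OnUnaryCycle (G.next^[t] j) := by
  induction t with
  | zero => exact h
  | succ t ih => rw [iterate_succ_apply']; exact ih.next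

lemma OnUnaryCycle.of_arc {j i : V} (h : G.OnUnaryCycle j) (hi : G.arc j i) :
    G.OnUnaryCycle i :=
  eq_next_of_arc h.1 hi ▸ h.next

lemma OnUnaryCycle.exists_iterate_next_eq {j : V} (h : G.OnUnaryCycle j) :
    ∃ p, G.next^[p] (G.next j) = j := by
  obtain ⟨-, n, hn, hper⟩ := h
  refine ⟨n - 1, ?_⟩
  rw [← iterate_succ_apply, Nat.succ_eq_add_one, Nat.sub_add_cancel hn]
  exact hper

lemma onUnaryCycle_of_transGen {a : V} (h : Relation.TransGen G.UnaryArc a a) :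
    G.OnUnaryCycle a := by
  have key : ∀ b, Relation.TransGen G.UnaryArc a b →
      G.outdeg a = 1 ∧ ∃ k, G.next^[k + 1] a = b := by
    intro b hab
    induction hab with
    | single hab =>
      have h1 : G.outdeg a = 1 := le_antisymm hab.2 (one_le_outdeg_of_arc hab.1)
      exact ⟨h1, 0, (eq_next_of_arc h1 hab.1).symm⟩
    | tail _ hbc ih =>
      obtain ⟨h1, k, hk⟩ := ih
      refine ⟨h1, k + 1, ?_⟩
      rw [iterate_succ_apply', hk]
      exact (eq_next_of_arc (le_antisymm hbc.2 (one_le_outdeg_of_arc hbc.1)) hbc.1).symm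
  obtain ⟨h1, k, hk⟩ := key a h
  exact ⟨h1, mk_mem_periodicPts k.succ_pos hk⟩

lemma acc_unaryArc_of_not_onUnaryCycle {i : V} (hi : ¬ G.OnUnaryCycle i) :
    Acc G.UnaryArc i := by
  have hwf : WellFounded fun j i => G.UnaryArc j i ∧ ¬ G.OnUnaryCycle i :=
    wellFounded_of_forall_not_transGen fun a ha => by
      obtain ⟨b, -, -, ha'⟩ := Relation.TransGen.tail'_iff.1 ha
      exact ha' (onUnaryCycle_of_transGen (Relation.TransGen.mono (fun _ _ h => h.1) _ _ ha))
  induction hwf.apply i with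
  | intro i _ ih => exact ⟨_, fun j hj => ih j ⟨hj, hi⟩ fun hj' => hi (hj'.of_arc hj.1)⟩

lemma sum_underIndeg_eq_sum_underOutdeg : ∑ i, G.underIndeg i = ∑ j, G.underOutdeg j := by
  simp only [underIndeg, underOutdeg, Finset.card_filter]
  exact Finset.sum_comm

theorem isSignedCycleGraph_of_forall_onUnaryCycle [Nonempty V] (hconn : G.Connected)
    (h : ∀ v, G.OnUnaryCycle v) : G.IsSignedCycleGraph := by
  have hout : ∀ v, G.underOutdeg v = 1 := fun v => by
    rw [underOutdeg, Finset.card_eq_one]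
    refine ⟨G.next v, Finset.ext fun i => ?_⟩
    simp only [Finset.mem_filter, Finset.mem_univ, true_and, Finset.mem_singleton]
    exact ⟨eq_next_of_arc (h v).1, fun hi => hi ▸ arc_next (h v).1⟩
  have hin : ∀ v, 1 ≤ G.underIndeg v := fun v => by
    obtain ⟨p, hp⟩ := (h v).exists_iterate_next_eq
    have harc := arc_next ((h v).iterate p).1
    rw [← iterate_succ_apply' G.next p v, iterate_succ_apply, hp] at harc
    exact Finset.card_pos.2 ⟨_, Finset.mem_filter.2 ⟨Finset.mem_univ _, harc⟩⟩
  have hsum := sum_underIndeg_eq_sum_underOutdeg (G := G)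
  simp only [hout] at hsum
  refine ⟨Fintype.card_pos, hconn, fun a b hab => ?_, hout, fun v => ?_⟩
  · have := two_le_outdeg_of_doubleArc hab
    have := (h a).1
    omega
  · exact ((Finset.sum_eq_sum_iff_of_le (fun v _ => hin v)).1 (by simpa using hsum.symm) v
      (Finset.mem_univ v)).symm

theorem OnUnaryCycle.exists_arc_of_not_isSignedCycleGraph (hconn : G.Connected)
    (hnc : ¬ G.IsSignedCycleGraph) {w : V} (hw : G.OnUnaryCycle w) :
    ∃ t m, G.arc m (G.next^[t] w) ∧ ¬ G.OnUnaryCycle m := by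
  by_contra! h
  have horbit : ∀ v, ∃ t, G.next^[t] w = v := fun v => by
    induction hconn w v with
    | refl => exact ⟨0, rfl⟩
    | tail _ hbc ih =>
      obtain ⟨t, rfl⟩ := ih
      rcases hbc with hbc | hcb
      · exact ⟨t + 1, by rw [iterate_succ_apply', ← eq_next_of_arc (hw.iterate t).1 hbc]⟩
      · have hc := h t _ hcb
        obtain ⟨p, hp⟩ := hc.exists_iterate_next_eq
        exact ⟨p + t, by rw [iterate_add_apply, eq_next_of_arc hc.1 hcb, hp]⟩
  have : Nonempty V := ⟨w⟩
  exact hnc (isSignedCycleGraph_of_forall_onUnaryCycle hconn fun v => by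
    obtain ⟨t, rfl⟩ := horbit v
    exact hw.iterate t)

variable (G) in
def UncutArc (j i : V) : Prop := G.arc j i ∧ ∀ m, G.arc m i → G.OnUnaryCycle m

theorem wellFounded_uncutArc (hconn : G.Connected) (hnc : ¬ G.IsSignedCycleGraph) :
    WellFounded G.UncutArc := by
  have hcycle : ∀ v, Relation.TransGen G.UncutArc v v →
      (G.OnUnaryCycle v ∧ ∀ m, G.arc m v → G.OnUnaryCycle m) ∧
        Relation.TransGen G.UncutArc (G.next v) (G.next v) := by
    intro v hv
    obtain ⟨u, -, huv, hcl⟩ := Relation.TransGen.tail'_iff.1 hv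
    have hv' : G.OnUnaryCycle v := (hcl u huv).of_arc huv
    obtain ⟨w, hvw, hwv⟩ := Relation.TransGen.head'_iff.1 hv
    obtain rfl : w = G.next v := eq_next_of_arc hv'.1 hvw.1
    exact ⟨⟨hv', hcl⟩, Relation.TransGen.tail' hwv hvw⟩
  refine wellFounded_of_forall_not_transGen fun a ha => ?_
  have horbit : ∀ t, Relation.TransGen G.UncutArc (G.next^[t] a) (G.next^[t] a) := by
    intro t
    induction t with
    | zero => exact ha
    | succ t ih => rw [iterate_succ_apply']; exact (hcycle _ ih).2
  obtain ⟨t, m, hm, hm'⟩ := (hcycle a ha).1.1.exists_arc_of_not_isSignedCycleGraph hconn hnc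
  exact hm' ((hcycle _ (horbit t)).1.2 m hm)

end SDigraph


namespace FDS

variable {V : Type} [DecidableEq V] {F : FDS V} {G : SDigraph V}

lemma mem_update {x : V → ℤ} (hx : F.mem x) {j : V} {v : ℤ} (hv : v ∈ F.X j) :
    F.mem (update x j v) := by
  intro i
  rcases eq_or_ne i j with rfl | hij
  · simpa using hv
  · simpa [hij] using hx i

lemma onGraph.apply_update_succ_eq (hF : F.onGraph G) {x : V → ℤ} (hx : F.mem x) {j i : V}
    (hj : x j + 1 ∈ F.X j) (h : ¬ G.arc j i) : F.f (update x j (x j + 1)) i = F.f x i := by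
  have hp : ¬ G.pos j i = true := fun hp => h (Or.inl hp)
  have hn : ¬ G.neg j i = true := fun hn => h (Or.inr hn)
  rw [hF.1] at hp
  rw [hF.2] at hn
  simp only [not_exists, not_and, not_lt] at hp hn
  exact le_antisymm (hp x hx hj) (hn x hx hj)

lemma onGraph.exists_apply_ne_of_arc (hF : F.onGraph G) {k z : V} (h : G.arc k z) :
    ∃ w, F.mem w ∧ w k + 1 ∈ F.X k ∧ F.f w z ≠ F.f (update w k (w k + 1)) z := by
  rcases h with h | h
  · obtain ⟨w, hw, hwk, hlt⟩ := (hF.1 k z).1 h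
    exact ⟨w, hw, hwk, hlt.ne⟩
  · obtain ⟨w, hw, hwk, hlt⟩ := (hF.2 k z).1 h
    exact ⟨w, hw, hwk, hlt.ne'⟩

variable [Fintype V]

theorem onGraph.apply_eq_of_forall_arc (hF : F.onGraph G) {i : V} {x y : V → ℤ}
    (hx : F.mem x) (hy : F.mem y) (h : ∀ j, G.arc j i → x j = y j) : F.f x i = F.f y i := by
  suffices ∀ d, ∀ x y : V → ℤ, ∑ j, (x j - y j).natAbs = d → F.mem x → F.mem y →
      (∀ j, G.arc j i → x j = y j) → F.f x i = F.f y i from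
    this _ x y rfl hx hy h
  clear hx hy h x y
  intro d
  induction d using Nat.strong_induction_on with
  | _ d ih =>
  intro x y hd hx hy h
  by_cases hxy : x = y
  · rw [hxy]
  obtain ⟨k, hk⟩ : ∃ k, x k ≠ y k := by
    by_contra! h'
    exact hxy (funext h')
  wlog hlt : x k < y k generalizing x y
  · refine (this y x ?_ hy hx (fun j hj => (h j hj).symm) (Ne.symm hxy) hk.symm (by omega)).symm
    rw [← hd]
    exact Finset.sum_congr rfl fun j _ => by rw [← Int.natAbs_neg, neg_sub]
  have hk1 : x k + 1 ∈ F.X k := F.interval k _ (hx k) _ (hy k) _ (by omega) (by omega)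
  rw [← hF.apply_update_succ_eq hx hk1 fun h' => hk (h k h')]
  refine ih _ ?_ _ y rfl (mem_update hx hk1) hy fun j hj => ?_
  · rw [← hd]
    refine Finset.sum_lt_sum (fun j _ => ?_) ⟨k, Finset.mem_univ k, by simp; omega⟩
    rcases eq_or_ne j k with rfl | hjk
    · simp; omega
    · simp [hjk]
  · rw [update_of_ne (by rintro rfl; exact hk (h j hj))]
    exact h j hj

theorem injOn_f_of_isSignedCycleGraph (hc : G.IsSignedCycleGraph) (hF : F.onGraph G)
    (hb : F.degreeBounded G) : Set.InjOn F.f {x | F.mem x} := by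
  have hout1 := hc.outdeg_eq_one
  obtain ⟨-, -, -, -, hin⟩ := hc
  intro x hx y hy hxy
  funext k
  by_contra hne
  obtain ⟨z, hz⟩ := SDigraph.exists_arc_of_outdeg_pos (hout1 k).ge
  have hpred : ∀ j, G.arc j z → j = k := fun j hj =>
    Finset.card_le_one.1 (hin z).le j (by simpa using hj) k (by simpa using hz)
  have hloc : ∀ u v, F.mem u → F.mem v → u k = v k → F.f u z = F.f v z :=
    fun u v hu hv huv => hF.apply_eq_of_forall_arc hu hv fun j hj => hpred j hj ▸ huv
  obtain ⟨w, hw, hwk, hwz⟩ := hF.exists_apply_ne_of_arc hz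
  have hcard : (F.X k).card ≤ 2 := by
    simpa [hout1 k] using (hb k).2 (by simp [hout1 k])
  have hw' := mem_update hw hwk
  have hfx := congrFun hxy z
  rcases Finset.eq_or_eq_add_one_of_card_le_two hcard (hw k) hwk (hx k) with h1 | h1 <;>
  rcases Finset.eq_or_eq_add_one_of_card_le_two hcard (hw k) hwk (hy k) with h2 | h2
  · exact hne (h1.trans h2.symm)
  · exact hwz (by rw [← hloc x w hx hw h1, hfx, hloc y _ hy hw' (by simpa using h2)])
  · exact hwz (by rw [← hloc y w hy hw h2, ← hfx, hloc x _ hx hw' (by simpa using h1)])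
  · exact hne (h1.trans h2.symm)

theorem not_nilpotent_of_isSignedCycleGraph (hc : G.IsSignedCycleGraph) (hF : F.onGraph G)
    (hb : F.degreeBounded G) : ¬ F.Nilpotent := by
  rintro ⟨m, -, c, hm⟩
  obtain ⟨k⟩ : Nonempty V := Fintype.card_pos_iff.1 hc.1
  obtain ⟨z, hz⟩ := SDigraph.exists_arc_of_outdeg_pos (hc.outdeg_eq_one k).ge
  obtain ⟨w, hw, hwk, -⟩ := hF.exists_apply_ne_of_arc hz
  have hinj := (injOn_f_of_isSignedCycleGraph hc hF hb).iterate (fun x hx => F.maps x hx) m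
  have := hinj hw (mem_update hw hwk) ((hm w hw).trans (hm _ (mem_update hw hwk)).symm)
  simpa using congrFun this k

end FDS

namespace SDigraph

variable {V : Type} [Fintype V] (G : SDigraph V)

/- Vertex `j` takes the values `0, …, top j` and outputs `0` or `high j`. When `outdeg j ≥ 2`
its signals are constant on `{0, high j}`: they only separate values below `2` from values
above when the outputs are `{0, 1}`, and they test `v = 1` for the lone double arc of a
`SoleDoubleArc` vertex, whose outputs are `{0, 2}`. -/

def SoleDoubleArc (j : V) : Prop := G.outdeg j = 2 ∧ ∃ i, G.DoubleArc j i

noncomputable def top (j : V) : ℕ := min (max (G.outdeg j) 1) 3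

noncomputable def threshold (j : V) : ℤ := if G.outdeg j ≤ 1 ∨ G.SoleDoubleArc j then 1 else 2

noncomputable def high (j : V) : ℤ := if G.SoleDoubleArc j then 2 else 1

def signal (j i : V) (v : ℤ) : Prop :=
  if G.DoubleArc j i then v = G.threshold j
  else if G.pos j i = true then G.threshold j ≤ v else v < G.threshold j

variable {G}

lemma one_le_threshold (j : V) : 1 ≤ G.threshold j := by
  unfold threshold; split_ifs <;> omega

lemma threshold_le_top (j : V) : G.threshold j ≤ G.top j := by
  unfold threshold top
  split_ifs with h <;> omega

lemma threshold_add_one_le_top_of_doubleArc {j i : V} (hd : G.DoubleArc j i) :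
    G.threshold j + 1 ≤ G.top j := by
  have h2 := two_le_outdeg_of_doubleArc hd
  unfold threshold top SoleDoubleArc
  by_cases h : G.outdeg j = 2
  · rw [if_pos (Or.inr ⟨h, i, hd⟩), h]
    norm_num
  · rw [if_neg (by push Not; exact ⟨by omega, fun h' => absurd h' h⟩)]
    have : min (max (G.outdeg j) 1) 3 = 3 := by omega
    rw [this]
    norm_num

lemma zero_lt_high (j : V) : 0 < G.high j := by
  unfold high; split_ifs <;> norm_num

lemma high_le_top (j : V) : G.high j ≤ G.top j := by
  unfold high top SoleDoubleArc
  split_ifs with h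
  · rw [h.1]; norm_num
  · omega

lemma signal_succ {j i : V} (hj : G.arc j i) (hn : ¬ G.neg j i = true) {v : ℤ}
    (h : G.signal j i v) : G.signal j i (v + 1) := by
  have hp : G.pos j i = true := hj.resolve_right hn
  have hd : ¬ G.DoubleArc j i := fun hd => hn hd.2
  simp only [signal, if_neg hd, if_pos hp] at h ⊢
  omega

lemma signal_of_signal_succ {j i : V} (hp : ¬ G.pos j i = true) {v : ℤ}
    (h : G.signal j i (v + 1)) : G.signal j i v := by
  have hd : ¬ G.DoubleArc j i := fun hd => hp hd.1
  simp only [signal, if_neg hd, if_neg hp] at h ⊢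
  omega

lemma exists_signal_step_of_pos {j i : V} (h : G.pos j i = true) :
    ∃ p : ℤ, 0 ≤ p ∧ p + 1 ≤ G.top j ∧ ¬ G.signal j i p ∧ G.signal j i (p + 1) := by
  refine ⟨G.threshold j - 1, by linarith [one_le_threshold (G := G) j], by
    linarith [threshold_le_top (G := G) j], ?_⟩
  unfold signal
  split_ifs <;> simp

lemma exists_signal_step_of_neg {j i : V} (h : G.neg j i = true) :
    ∃ p : ℤ, 0 ≤ p ∧ p + 1 ≤ G.top j ∧ G.signal j i p ∧ ¬ G.signal j i (p + 1) := by
  by_cases hd : G.DoubleArc j i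
  · refine ⟨G.threshold j, by linarith [one_le_threshold (G := G) j],
      threshold_add_one_le_top_of_doubleArc hd, ?_⟩
    simp [signal, hd]
  · have hp : ¬ G.pos j i = true := fun hp => hd ⟨hp, h⟩
    refine ⟨G.threshold j - 1, by linarith [one_le_threshold (G := G) j], by
      linarith [threshold_le_top (G := G) j], ?_⟩
    simp [signal, hd, hp]

lemma signal_zero_iff_signal_high {j i : V} (hj : G.arc j i)
    (h : ¬ G.outdeg j ≤ 1) : G.signal j i 0 ↔ G.signal j i (G.high j) := by
  by_cases hs : G.SoleDoubleArc j
  · obtain ⟨h2, i₀, hd₀⟩ := hs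
    have hd := doubleArc_of_arc_of_outdeg_eq_two h2 hd₀ hj
    have hth : G.threshold j = 1 := if_pos (Or.inr ⟨h2, i₀, hd₀⟩)
    have hhi : G.high j = 2 := if_pos ⟨h2, i₀, hd₀⟩
    simp [signal, hd, hth, hhi]
  · have hth : G.threshold j = 2 := if_neg (by tauto)
    have hhi : G.high j = 1 := if_neg hs
    simp only [signal, hth, hhi]
    split_ifs <;> norm_num

variable (G)

/-- Gate with controlling value `c i`: an OR gate on the input signals if `c i` holds and an
AND gate otherwise. -/
def gate (c : V → Prop) (x : V → ℤ) (i : V) : Prop :=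
  (∃ j, G.arc j i ∧ (G.signal j i (x j) ↔ c i)) ↔ c i

noncomputable def gateMap (c : V → Prop) (x : V → ℤ) (i : V) : ℤ :=
  if G.gate c x i then G.high i else 0

def box : Set (V → ℤ) := {x | ∀ i, x i = 0 ∨ x i = G.high i}

variable {G}

lemma gate_iff_of_exists {c : V → Prop} {x : V → ℤ} {i : V}
    (h : ∃ j, G.arc j i ∧ (G.signal j i (x j) ↔ c i)) : G.gate c x i ↔ c i := by
  simp [gate, h]

lemma gate_iff_signal {c : V → Prop} {x : V → ℤ} {i j : V} (hj : G.arc j i)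
    (h : ∀ k ≠ j, G.arc k i → (G.signal k i (x k) ↔ ¬ c i)) :
    G.gate c x i ↔ G.signal j i (x j) := by
  have : (∃ k, G.arc k i ∧ (G.signal k i (x k) ↔ c i)) ↔ (G.signal j i (x j) ↔ c i) := by
    refine ⟨fun ⟨k, hk, hs⟩ => ?_, fun hs => ⟨j, hj, hs⟩⟩
    rcases eq_or_ne k j with rfl | hkj
    · exact hs
    · have := h k hkj hk
      tauto
  rw [gate, this]
  tauto

lemma gate_mono {c : V → Prop} {x y : V → ℤ} {i : V}
    (h : ∀ k, G.arc k i → G.signal k i (x k) → G.signal k i (y k)) :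
    G.gate c x i → G.gate c y i := by
  unfold gate
  by_cases hc : c i
  · simp only [hc, iff_true]
    exact fun ⟨k, hk, hs⟩ => ⟨k, hk, h k hk hs⟩
  · simp only [hc, iff_false, not_exists, not_and, not_not]
    exact fun H k hk => h k hk (H k hk)

lemma gateMap_mono {c : V → Prop} {x y : V → ℤ} {i : V}
    (h : ∀ k, G.arc k i → G.signal k i (x k) → G.signal k i (y k)) :
    G.gateMap c x i ≤ G.gateMap c y i := by
  unfold gateMap
  split_ifs with hx hy
  · rfl
  · exact absurd (gate_mono h hx) hy
  · exact (zero_lt_high i).le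
  · rfl

lemma gateMap_congr {c c' : V → Prop} {x y : V → ℤ} {i : V} (hc : c i ↔ c' i)
    (h : ∀ k, G.arc k i → (G.signal k i (x k) ↔ G.signal k i (y k))) :
    G.gateMap c x i = G.gateMap c' y i := by
  have : G.gate c x i ↔ G.gate c' y i := by
    unfold gate
    rw [← hc]
    exact Iff.iff (exists_congr fun k => and_congr_right fun hk => by rw [h k hk]) Iff.rfl
  unfold gateMap
  rw [if_congr this rfl rfl]

lemma gateMap_mem_box (c : V → Prop) (x : V → ℤ) : G.gateMap c x ∈ G.box := by
  intro i
  unfold gateMap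
  split_ifs <;> simp

lemma exists_signal_iff {k i : V} (h : G.arc k i) (b : Prop) :
    ∃ v : ℤ, 0 ≤ v ∧ v ≤ G.top k ∧ (G.signal k i v ↔ b) := by
  obtain ⟨p, hp0, hp1, hs⟩ : ∃ p : ℤ, 0 ≤ p ∧ p + 1 ≤ G.top k ∧
      (G.signal k i p ∧ ¬ G.signal k i (p + 1) ∨ ¬ G.signal k i p ∧ G.signal k i (p + 1)) := by
    rcases h with h | h
    · obtain ⟨p, hp0, hp1, hs⟩ := exists_signal_step_of_pos h
      exact ⟨p, hp0, hp1, Or.inr hs⟩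
    · obtain ⟨p, hp0, hp1, hs⟩ := exists_signal_step_of_neg h
      exact ⟨p, hp0, hp1, Or.inl hs⟩
  by_cases hb : b
  · rcases hs with hs | hs
    · exact ⟨p, hp0, by omega, by tauto⟩
    · exact ⟨p + 1, by omega, hp1, by tauto⟩
  · rcases hs with hs | hs
    · exact ⟨p + 1, by omega, hp1, by tauto⟩
    · exact ⟨p, hp0, by omega, by tauto⟩

variable (G) in
noncomputable def quietState (c : V → Prop) (i : V) : V → ℤ := fun k =>
  if h : G.arc k i then (exists_signal_iff h (¬ c i)).choose else 0

lemma quietState_mem (c : V → Prop) (i k : V) :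
    0 ≤ G.quietState c i k ∧ G.quietState c i k ≤ G.top k := by
  unfold quietState
  split_ifs with h
  · exact ⟨(exists_signal_iff h _).choose_spec.1, (exists_signal_iff h _).choose_spec.2.1⟩
  · simp

lemma signal_quietState {c : V → Prop} {k i : V} (h : G.arc k i) :
    G.signal k i (G.quietState c i k) ↔ ¬ c i := by
  simp only [quietState, dif_pos h]
  exact (exists_signal_iff h _).choose_spec.2.2

lemma gateMap_update_quietState [DecidableEq V] (c : V → Prop) {j i : V} (hj : G.arc j i)
    (v : ℤ) : G.gateMap c (update (G.quietState c i) j v) i =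
      if G.signal j i v then G.high i else 0 := by
  unfold gateMap
  rw [if_congr (gate_iff_signal hj fun k hkj hk => ?_) rfl rfl]
  · simp
  · rw [update_of_ne hkj]
    exact signal_quietState hk

variable (G) in
noncomputable def gateSystem (c : V → Prop) : FDS V where
  X j := Finset.Icc 0 (G.top j)
  nonempty j := ⟨0, by simp⟩
  interval j a ha b hb v hav hvb := by
    simp only [Finset.mem_Icc] at *
    omega
  f := G.gateMap c
  maps x _ i := by
    have := high_le_top (G := G) i
    have := zero_lt_high (G := G) i
    show G.gateMap c x i ∈ Finset.Icc 0 (G.top i : ℤ)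
    rcases gateMap_mem_box c x i with h | h <;> rw [h, Finset.mem_Icc] <;> omega

lemma mem_gateSystem_iff {c : V → Prop} {x : V → ℤ} :
    (G.gateSystem c).mem x ↔ ∀ i, 0 ≤ x i ∧ x i ≤ G.top i := by
  simp [FDS.mem, gateSystem]

lemma exists_gateMap_step [DecidableEq V] (c : V → Prop) {j i : V} (hj : G.arc j i) {p : ℤ}
    (hp0 : 0 ≤ p) (hp1 : p + 1 ≤ G.top j) : ∃ x, (G.gateSystem c).mem x ∧
      x j + 1 ∈ (G.gateSystem c).X j ∧
      G.gateMap c x i = (if G.signal j i p then G.high i else 0) ∧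
      G.gateMap c (update x j (x j + 1)) i = if G.signal j i (p + 1) then G.high i else 0 := by
  refine ⟨update (G.quietState c i) j p, mem_gateSystem_iff.2 fun k => ?_, ?_, ?_, ?_⟩
  · rcases eq_or_ne k j with rfl | hkj
    · simp only [update_self]; omega
    · simpa [hkj] using quietState_mem c i k
  · simp [gateSystem]; omega
  · exact gateMap_update_quietState c hj p
  · simpa using gateMap_update_quietState c hj (p + 1)

theorem onGraph_gateSystem [DecidableEq V] (c : V → Prop) : (G.gateSystem c).onGraph G := by
  have hhigh := zero_lt_high (G := G)
  refine ⟨fun j i => ⟨fun h => ?_, fun ⟨x, _, _, hlt⟩ => ?_⟩,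
    fun j i => ⟨fun h => ?_, fun ⟨x, _, _, hlt⟩ => ?_⟩⟩
  · obtain ⟨p, hp0, hp1, hsp, hsp1⟩ := exists_signal_step_of_pos h
    obtain ⟨x, hx, hxj, h0, h1⟩ := exists_gateMap_step c (Or.inl h) hp0 hp1
    refine ⟨x, hx, hxj, ?_⟩
    simp only [gateSystem, h0, h1, if_neg hsp, if_pos hsp1, hhigh i]
  · by_contra hp
    refine hlt.not_ge (gateMap_mono fun k hk => ?_)
    rcases eq_or_ne k j with rfl | hkj
    · simpa using signal_of_signal_succ hp
    · simp [hkj]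
  · obtain ⟨p, hp0, hp1, hsp, hsp1⟩ := exists_signal_step_of_neg h
    obtain ⟨x, hx, hxj, h0, h1⟩ := exists_gateMap_step c (Or.inr h) hp0 hp1
    refine ⟨x, hx, hxj, ?_⟩
    simp only [gateSystem, h0, h1, if_pos hsp, if_neg hsp1, hhigh i]
  · by_contra hn
    refine hlt.not_ge (gateMap_mono fun k hk => ?_)
    rcases eq_or_ne k j with rfl | hkj
    · simpa using signal_succ hk hn
    · simp [hkj]

theorem degreeBounded_gateSystem (c : V → Prop) (h : ∀ i, G.outdeg i = 0 → 0 < G.indeg i) :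
    (G.gateSystem c).degreeBounded G := by
  intro i
  have hcard : ((G.gateSystem c).X i).card = G.top i + 1 := by simp [gateSystem]
  simp only [hcard, top]
  constructor
  · rintro ⟨h0, -⟩
    simp [h0]
  · intro hi
    have := h i
    omega

open Filter

lemma zero_mem_box : (0 : V → ℤ) ∈ G.box := fun _ => Or.inl rfl

lemma mapsTo_gateMap_box (c : V → Prop) : Set.MapsTo (G.gateMap c) G.box G.box :=
  fun x _ => gateMap_mem_box c x

/-- Off the unary cycles, information travels only along arcs leaving vertices of out-degree
one, since a vertex of larger out-degree sends constant signals from the box. -/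
theorem eventually_gateMap_iterate_eq (c : V → Prop) :
    ∀ᶠ t in atTop, ∀ k, ¬ G.OnUnaryCycle k →
      ∀ x ∈ G.box, ∀ y ∈ G.box, (G.gateMap c)^[t] x k = (G.gateMap c)^[t] y k := by
  have hdet : ∀ i, ∀ x ∈ G.box, ∀ y ∈ G.box, (∀ j, G.UnaryArc j i → x j = y j) →
      G.gateMap c x i = G.gateMap c y i := fun i x hx y hy h =>
    gateMap_congr Iff.rfl fun k hk => by
      by_cases hk1 : G.outdeg k ≤ 1
      · rw [h k ⟨hk, hk1⟩]
      · have := signal_zero_iff_signal_high hk hk1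
        rcases hx k with h1 | h1 <;> rcases hy k with h2 | h2 <;> rw [h1, h2] <;> tauto
  refine eventually_all.2 fun k => ?_
  by_cases hk : G.OnUnaryCycle k
  · simp [hk]
  · simpa [hk] using eventually_iterate_apply_eq_of_acc _ (mapsTo_gateMap_box c) hdet
      (acc_unaryArc_of_not_onUnaryCycle hk)

variable (G) in
noncomputable def settleTime : ℕ :=
  (eventually_atTop.1 (eventually_gateMap_iterate_eq (G := G) fun _ => True)).choose

variable (G) in
noncomputable def limitState : V → ℤ := (G.gateMap fun _ => True)^[G.settleTime] 0

lemma gateMap_iterate_eq_limitState {t : ℕ} (ht : G.settleTime ≤ t) {x : V → ℤ}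
    (hx : x ∈ G.box) {k : V} (hk : ¬ G.OnUnaryCycle k) :
    (G.gateMap fun _ => True)^[t] x k = G.limitState k := by
  obtain ⟨s, rfl⟩ := Nat.exists_eq_add_of_le ht
  rw [iterate_add_apply]
  exact (eventually_atTop.1 (eventually_gateMap_iterate_eq (G := G) fun _ => True)).choose_spec
    _ le_rfl k hk _ ((mapsTo_gateMap_box _).iterate s hx) 0 zero_mem_box

lemma gateMap_iterate_eq_of_not_onUnaryCycle {c c' : V → Prop}
    (hc : ∀ i, ¬ G.OnUnaryCycle i → (c i ↔ c' i)) (t : ℕ) (x : V → ℤ) {k : V}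
    (hk : ¬ G.OnUnaryCycle k) : (G.gateMap c)^[t] x k = (G.gateMap c')^[t] x k := by
  induction t generalizing k with
  | zero => rfl
  | succ t ih =>
    rw [iterate_succ_apply', iterate_succ_apply']
    exact gateMap_congr (hc k hk) fun j hj => by rw [ih fun hj' => hk (hj'.of_arc hj)]

variable (G) in
/-- Gates off the unary cycles are OR gates. A gate on a unary cycle is given the value that
some input from off the cycles eventually sends, if there is one: that input then fixes the
gate's output and cuts the cycle. -/
def cycleControl (i : V) : Prop :=
  ¬ G.OnUnaryCycle i ∨ ∃ j, G.arc j i ∧ ¬ G.OnUnaryCycle j ∧ G.signal j i (G.limitState j)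

variable (G) in
def settled : Set (V → ℤ) :=
  {x | x ∈ G.box ∧ ∀ k, ¬ G.OnUnaryCycle k → x k = G.limitState k}

lemma cycleControl_of_not_onUnaryCycle {i : V} (hi : ¬ G.OnUnaryCycle i) :
    G.cycleControl i ↔ True :=
  iff_true_intro (Or.inl hi)

lemma iterate_gateMap_mem_settled (x : V → ℤ) :
    (G.gateMap G.cycleControl)^[G.settleTime + 1] x ∈ G.settled := by
  refine ⟨?_, fun k hk => ?_⟩
  · rw [iterate_succ_apply']
    exact gateMap_mem_box _ _
  · rw [gateMap_iterate_eq_of_not_onUnaryCycle (c' := fun _ => True)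
      (fun i hi => cycleControl_of_not_onUnaryCycle hi) _ _ hk, iterate_succ_apply]
    exact gateMap_iterate_eq_limitState le_rfl (gateMap_mem_box _ x) hk

lemma mapsTo_gateMap_settled : Set.MapsTo (G.gateMap G.cycleControl) G.settled G.settled := by
  intro x hx
  refine ⟨gateMap_mem_box _ _, fun k hk => ?_⟩
  calc G.gateMap G.cycleControl x k = G.gateMap (fun _ => True) G.limitState k :=
        gateMap_congr (cycleControl_of_not_onUnaryCycle hk) fun j hj => by
          rw [hx.2 j fun hj' => hk (hj'.of_arc hj)]
    _ = G.limitState k := by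
        rw [limitState, ← iterate_succ_apply' (G.gateMap fun _ => True)]
        exact gateMap_iterate_eq_limitState (Nat.le_succ _) zero_mem_box hk

lemma gateMap_cycleControl_eq_of_settled {i : V} {x y : V → ℤ} (hx : x ∈ G.settled)
    (hy : y ∈ G.settled) (h : ∀ j, G.UncutArc j i → x j = y j) :
    G.gateMap G.cycleControl x i = G.gateMap G.cycleControl y i := by
  by_cases hcut : G.OnUnaryCycle i ∧ ∃ m, G.arc m i ∧ ¬ G.OnUnaryCycle m
  · obtain ⟨hi, m, hm, hm'⟩ := hcut
    have hgate : ∀ z ∈ G.settled, G.gate G.cycleControl z i ↔ G.cycleControl i := by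
      intro z hz
      refine gate_iff_of_exists ?_
      by_cases hc : G.cycleControl i
      · obtain ⟨k, hk, hk', hs⟩ := hc.resolve_left (not_not.2 hi)
        exact ⟨k, hk, by rw [hz.2 k hk']; exact iff_of_true hs hc⟩
      · refine ⟨m, hm, ?_⟩
        rw [hz.2 m hm']
        exact iff_of_false (fun hs => hc (Or.inr ⟨m, hm, hm', hs⟩)) hc
    unfold gateMap
    rw [if_congr (hgate x hx) rfl rfl, if_congr (hgate y hy) rfl rfl]
  · refine gateMap_congr Iff.rfl fun j hj => ?_
    suffices x j = y j by rw [this]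
    by_cases hi : G.OnUnaryCycle i
    · exact h j ⟨hj, fun m hm => by_contra fun hm' => hcut ⟨hi, m, hm, hm'⟩⟩
    · have hj' : ¬ G.OnUnaryCycle j := fun hj' => hi (hj'.of_arc hj)
      rw [hx.2 j hj', hy.2 j hj']

theorem nilpotent_gateSystem_cycleControl (hconn : G.Connected)
    (hnc : ¬ G.IsSignedCycleGraph) : (G.gateSystem G.cycleControl).Nilpotent := by
  obtain ⟨T, hT⟩ := eventually_atTop.1 (eventually_all.2 fun i =>
    eventually_iterate_apply_eq_of_acc _ mapsTo_gateMap_settled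
      (fun _ _ hx _ hy h => gateMap_cycleControl_eq_of_settled hx hy h)
      ((wellFounded_uncutArc hconn hnc).apply i))
  refine ⟨T + (G.settleTime + 1), by omega,
    (G.gateMap G.cycleControl)^[T + (G.settleTime + 1)] 0, fun x _ => ?_⟩
  show (G.gateMap G.cycleControl)^[_] x = _
  rw [iterate_add_apply _ T, iterate_add_apply _ T]
  funext i
  exact hT T le_rfl i _ (iterate_gateMap_mem_settled x) _ (iterate_gateMap_mem_settled 0)

lemma exists_nilpotent_of_forall_not_arc [DecidableEq V] (h : ∀ a b, ¬ G.arc a b) :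
    ∃ F : FDS V, F.onGraph G ∧ F.degreeBounded G ∧ F.Nilpotent := by
  have hout : ∀ i, G.outdeg i = 0 := fun i => outdeg_eq_zero_iff.2 (h i)
  have hin : ∀ i, G.indeg i = 0 := fun i => indeg_eq_zero_iff.2 fun j => h j i
  refine ⟨⟨fun _ => {0}, fun _ => Finset.singleton_nonempty 0, fun _ a ha b hb c hac hcb => ?_,
      fun _ _ => 0, fun _ _ _ => Finset.mem_singleton_self 0⟩,
    ⟨fun j i => ?_, fun j i => ?_⟩, fun i => ?_, 1, le_rfl, 0, fun _ _ => rfl⟩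
  · simp only [Finset.mem_singleton] at *
    omega
  · simpa using fun hp => h j i (Or.inl hp)
  · simpa using fun hn => h j i (Or.inr hn)
  · simp [hout i, hin i]

theorem exists_nilpotent_of_not_isSignedCycleGraph [DecidableEq V] (hconn : G.Connected)
    (hnc : ¬ G.IsSignedCycleGraph) :
    ∃ F : FDS V, F.onGraph G ∧ F.degreeBounded G ∧ F.Nilpotent := by
  by_cases harc : ∃ a b, G.arc a b
  · obtain ⟨a, b, hab⟩ := harc
    exact ⟨_, onGraph_gateSystem _,
      degreeBounded_gateSystem _ (hconn.indeg_pos_of_outdeg_eq_zero hab),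
      nilpotent_gateSystem_cycleControl hconn hnc⟩
  · push Not at harc
    exact exists_nilpotent_of_forall_not_arc harc

end SDigraph

/-- For a connected signed digraph `G`, there exists a nilpotent
degree-bounded system on `G` iff `G` is not a signed cycle. -/
theorem stmt1 (n : ℕ) (G : SDigraph (Fin n)) (hconn : SDigraph.Connected G) :
    (∃ F : FDS (Fin n), F.onGraph G ∧ F.degreeBounded G ∧ F.Nilpotent) ↔
      ¬ SDigraph.IsSignedCycleGraph G :=
  ⟨fun ⟨_, hF, hb, hnil⟩ hc => FDS.not_nilpotent_of_isSignedCycleGraph hc hF hb hnil,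
    SDigraph.exists_nilpotent_of_not_isSignedCycleGraph hconn⟩
end
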